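/- arXiv:2505.08735 — 2 statements merged into one kernel-verified Lean document; each statement's English description precedes it below -/
import Mathlib

section
/- Let α > 0, r : T → ℝ on a finite nonempty set T, and π the softmax policy π(τ) = exp(r(τ)/α)/Z. Then for any τ₁, τ₂ ∈ T, σ(r(τ₁) - r(τ₂)) = σ(α·(log π(τ₁) - log π(τ₂))), where σ(x) = 1/(1+exp(-x)) is the logistic sigmoid. -/
theorem Real.log_exp_div (x : ℝ) {Z : ℝ} (hZ : Z ≠ 0) :
    Real.log (Real.exp x / Z) = x - Real.log Z := by
  rw [Real.log_div (Real.exp_ne_zero x) hZ, Real.log_exp]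

theorem mul_sub_log_exp_div_div {α Z : ℝ} (hα : α ≠ 0) (hZ : Z ≠ 0) (a b : ℝ) :
    α * (Real.log (Real.exp (a / α) / Z) - Real.log (Real.exp (b / α) / Z)) = a - b := by
  rw [Real.log_exp_div _ hZ, Real.log_exp_div _ hZ, sub_sub_sub_cancel_right, mul_sub,
    mul_div_cancel₀ a hα, mul_div_cancel₀ b hα]

theorem bradley_terry_policy_reparameterization_general
    {T : Type*} [Fintype T] (α : ℝ) (hα : 0 < α) (r : T → ℝ)
    (Z : ℝ) (hZ : Z = ∑ τ' : T, Real.exp (r τ' / α))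
    (p : T → ℝ) (hp : ∀ τ, p τ = Real.exp (r τ / α) / Z)
    (σ : ℝ → ℝ) :
    ∀ τ₁ τ₂ : T,
      σ (r τ₁ - r τ₂) = σ (α * (Real.log (p τ₁) - Real.log (p τ₂))) := by
  intro τ₁ τ₂
  have hZ_pos : 0 < Z :=
    hZ ▸ Finset.sum_pos (fun τ _ => Real.exp_pos _) ⟨τ₁, Finset.mem_univ τ₁⟩
  rw [hp, hp, mul_sub_log_exp_div_div hα.ne' hZ_pos.ne']

/-- The Bradley-Terry preference probability can be expressed purely in terms
of policy log-probabilities, with the partition function `Z` cancelling. -/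
theorem bradley_terry_policy_reparameterization
    {T : Type*} [Fintype T] [Nonempty T] (α : ℝ) (hα : 0 < α) (r : T → ℝ)
    (Z : ℝ) (hZ : Z = ∑ τ' : T, Real.exp (r τ' / α))
    (p : T → ℝ) (hp : ∀ τ, p τ = Real.exp (r τ / α) / Z)
    (σ : ℝ → ℝ) (hσ : ∀ x, σ x = 1 / (1 + Real.exp (-x))) :
    ∀ τ₁ τ₂ : T,
      σ (r τ₁ - r τ₂) = σ (α * (Real.log (p τ₁) - Real.log (p τ₂))) :=
  bradley_terry_policy_reparameterization_general α hα r Z hZ p hp σ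
end

section
/- For the Plackett-Luce model on a finite list of n distinct items with utilities u : Fin n → ℝ, the probabilities over all rankings sum to 1: ∑_{permutations π of Fin n} ∏_{k=0}^{n-1} exp(u(π(k))) / ∑_{j=k}^{n-1} exp(u(π(j))) = 1. -/
open Finset

/-!
Rank the first item and recurse: under `Equiv.Perm.decomposeFin` a ranking of `n + 1` items is
its top item `i` together with a ranking of the remaining `n` items, and its Plackett-Luce
probability factors as `w i / ∑ j, w j` times the probability of that smaller ranking. Summing
over the smaller rankings gives `1` by induction, and then summing over `i` gives `1` again.
-/

namespace Equiv.Perm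

variable {K : Type*} [Field K] {n : ℕ}

noncomputable def plackettLuce (w : Fin n → K) (p : Perm (Fin n)) : K :=
  ∏ k, w (p k) / ∑ j ∈ univ.filter (k ≤ ·), w (p j)

theorem plackettLuce_decomposeFin_symm (w : Fin (n + 1) → K) (i : Fin (n + 1))
    (e : Perm (Fin n)) :
    plackettLuce w (decomposeFin.symm (i, e)) =
      w i / (∑ j, w j) * plackettLuce (fun m => w (swap 0 i m.succ)) e := by
  have top_weight : ∑ j ∈ univ.filter ((0 : Fin (n + 1)) ≤ ·), w (decomposeFin.symm (i, e) j) =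
      ∑ j, w j := by
    rw [filter_true_of_mem fun j _ => Fin.zero_le j, Equiv.sum_comp]
  have rest_weight (k : Fin n) :
      ∑ j ∈ univ.filter (k.succ ≤ ·), w (decomposeFin.symm (i, e) j) =
        ∑ j ∈ univ.filter (k ≤ ·), w (swap 0 i (e j).succ) := by
    simp only [filter_le_eq_Ici, Fin.sum_Ici_succ, decomposeFin_symm_apply_succ]
  simp only [plackettLuce, Fin.prod_univ_succ, decomposeFin_symm_apply_zero, top_weight,
    rest_weight, decomposeFin_symm_apply_succ]

theorem sum_plackettLuce_eq_one [LinearOrder K] [IsStrictOrderedRing K] (w : Fin n → K)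
    (hw : ∀ i, 0 < w i) : ∑ p, plackettLuce w p = 1 := by
  induction n with
  | zero => simp [plackettLuce]
  | succ n ih =>
    have total_pos : 0 < ∑ j, w j := sum_pos (fun j _ => hw j) univ_nonempty
    calc ∑ p, plackettLuce w p
        = ∑ i, ∑ e, plackettLuce w (decomposeFin.symm (i, e)) := by
          rw [← Equiv.sum_comp decomposeFin.symm, Fintype.sum_prod_type]
      _ = ∑ i, w i / (∑ j, w j) := by
          refine sum_congr rfl fun i _ => ?_
          simp only [plackettLuce_decomposeFin_symm, ← mul_sum, ih _ fun m => hw _, mul_one]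
      _ = 1 := by rw [← sum_div, div_self total_pos.ne']

end Equiv.Perm

/-- The Plackett-Luce probabilities over all rankings (permutations) of `n`
items sum to `1`: for each permutation `π`, the probability is
`∏ k, exp(u (π k)) / ∑_{j ≥ k} exp(u (π j))`. -/
theorem plackett_luce_sum_to_one (n : ℕ) (u : Fin n → ℝ) :
    ∑ p : Equiv.Perm (Fin n),
      ∏ k : Fin n,
        Real.exp (u (p k)) /
          ∑ j ∈ Finset.univ.filter (fun j : Fin n => k ≤ j),
            Real.exp (u (p j)) = 1 :=
  Equiv.Perm.sum_plackettLuce_eq_one (fun i => Real.exp (u i)) fun i => Real.exp_pos (u i)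
end
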